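/- For all impartial games G, H, Ĥ, the variation set of the ordinal sum with substitution satisfies 𝒱(G :_{Ĥ} H) = (𝒱(G) + mex 𝒱(Ĥ)) : 𝒱(H), where on the right-hand side + denotes elementwise addition of a natural number and : denotes the colon operation on finite sets of naturals. -/

import Mathlib

/-- mex (minimum excludant) of a set of naturals. -/
noncomputable def mexS (A : Set ℕ) : ℕ := sInf {n | n ∉ A}

/-- The colon operation on sets of naturals:
`A : B = A ∪ {x_i | i ∈ B}` where `x_0 < x_1 < ⋯` enumerates `ℕ \ A`. -/
noncomputable def colonS (A B : Set ℕ) : Set ℕ :=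
  A ∪ (fun i => Nat.nth (fun n => n ∉ A) i) '' B

/-- Elementwise addition of a natural number: `A + b = {a + b | a ∈ A}`. -/
def addS (A : Set ℕ) (b : ℕ) : Set ℕ := (· + b) '' A

/-- Elementwise bitwise XOR: `A ⊕ x = {a XOR x | a ∈ A}`. -/
def xorS (A : Set ℕ) (x : ℕ) : Set ℕ := (fun a => a ^^^ x) '' A

/-- `Gn n` is the set of (hereditarily finite) games born by day `n`:
`Gn 0 = {∅}`, `Gn (n+1) = 2^(Gn n)`. -/
noncomputable def Gn : ℕ → ZFSet
  | 0 => {∅}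
  | n + 1 => ZFSet.powerset (Gn n)

/-- An impartial game: a hereditarily finite set. -/
def IsGame (G : ZFSet) : Prop := ∃ n, G ∈ Gn n

/-- Birthday: least `n` with `G ∈ Gn n`. -/
noncomputable def birthday (G : ZFSet) : ℕ := sInf {n | G ∈ Gn n}

/-- `g` is the Grundy-number function: `g G = mex {g G' | G' ∈ G}`. -/
def IsGrundy (g : ZFSet → ℕ) : Prop :=
  ∀ G : ZFSet, g G = mexS {n | ∃ x ∈ G, g x = n}

/-- The variation set of `G` with respect to a Grundy function `g`:
the set of Grundy values of the options of `G`. -/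
def vset (g : ZFSet → ℕ) (G : ZFSet) : Set ℕ := {n | ∃ x ∈ G, g x = n}

/-- `f` is the ordinal sum with substitution: `f G H Ĥ = G :_{Ĥ} H`,
defined by `G :_{Ĥ} H = {G' :_{Ĥ} Ĥ | G' ∈ G} ∪ {G :_{Ĥ} H' | H' ∈ H}`. -/
def IsOSub (f : ZFSet → ZFSet → ZFSet → ZFSet) : Prop :=
  ∀ G H Hh x : ZFSet,
    x ∈ f G H Hh ↔ (∃ G' ∈ G, x = f G' Hh Hh) ∨ (∃ H' ∈ H, x = f G H' Hh)

/-- `s` is the ordinal sum: `G : H = {G' | G' ∈ G} ∪ {G : H' | H' ∈ H}`. -/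
def IsOSum (s : ZFSet → ZFSet → ZFSet) : Prop :=
  ∀ G H x : ZFSet, x ∈ s G H ↔ x ∈ G ∨ (∃ H' ∈ H, x = s G H')

/-- `d` is the disjunctive sum: `G + H = {G' + H | G' ∈ G} ∪ {G + H' | H' ∈ H}`. -/
def IsDSum (d : ZFSet → ZFSet → ZFSet) : Prop :=
  ∀ G H x : ZFSet, x ∈ d G H ↔ (∃ G' ∈ G, x = d G' H) ∨ (∃ H' ∈ H, x = d G H')

/-- The nimber `*n = {*m | m < n}`. -/
noncomputable def nim : ℕ → ZFSet
  | 0 => ∅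
  | n + 1 => insert (nim n) (nim n)

/-- Left-associated chain of ordinal sums with substitution:
`chain f X Xh s k = X s :_{Xh (s+1)} X (s+1) :_{Xh (s+2)} ⋯ :_{Xh (s+k)} X (s+k)`. -/
noncomputable def chain (f : ZFSet → ZFSet → ZFSet → ZFSet)
    (X Xh : ℕ → ZFSet) (s : ℕ) : ℕ → ZFSet
  | 0 => X s
  | k + 1 => f (chain f X Xh s k) (X (s + k + 1)) (Xh (s + k + 1))

-- auxiliary lemmas
theorem ZFSet.mem_toSet (x G : ZFSet) : x ∈ G.toSet ↔ x ∈ G := Iff.rfl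

theorem ZFSet.toSet_injective : Function.Injective ZFSet.toSet := SetLike.coe_injective

theorem ZFSet.toSet_empty' : (∅ : ZFSet).toSet = ∅ := ZFSet.coe_empty

lemma mexS_not_mem {S : Set ℕ} (hS : S.Finite) : mexS S ∉ S :=
  Nat.sInf_mem (s := {n | n ∉ S}) hS.infinite_compl.nonempty

lemma mem_of_lt_mexS {S : Set ℕ} {i : ℕ} (h : i < mexS S) : i ∈ S := by
  by_contra hi
  exact absurd (Nat.sInf_le hi) (not_le.2 h)

lemma mexS_eq {S : Set ℕ} {k : ℕ} (h1 : k ∉ S) (h2 : ∀ j < k, j ∈ S) : mexS S = k :=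
  le_antisymm (Nat.sInf_le h1)
    (le_csInf ⟨k, h1⟩ fun j hj => le_of_not_gt fun hlt => hj (h2 j hlt))

lemma mexS_colonS {A B : Set ℕ} (hA : A.Finite) (hB : B.Finite) :
    mexS (colonS A B) = Nat.nth (fun n => n ∉ A) (mexS B) := by
  classical
  set p := fun n => n ∉ A with hp_def
  have hp : (setOf p).Infinite := hA.infinite_compl
  apply mexS_eq
  · rintro (hmem | ⟨i, hi, heq⟩)
    · exact (Nat.nth_mem_of_infinite hp (mexS B)) hmem
    · have : i = mexS B := Nat.nth_injective hp heq
      exact mexS_not_mem hB (this ▸ hi)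
  · intro j hj
    by_cases hjA : j ∈ A
    · exact Or.inl hjA
    · right
      have hj' : Nat.nth p (Nat.count p j) = j := Nat.nth_count hjA
      have hcnt : Nat.count p j < mexS B := by
        have := hj; rw [← hj'] at this
        exact (Nat.nth_lt_nth hp).1 this
      exact ⟨Nat.count p j, mem_of_lt_mexS hcnt, hj'⟩

lemma nth_addS {A : Set ℕ} (hA : A.Finite) (h : ℕ) :
    Nat.nth (fun n => n ∉ addS A h) h = mexS A + h := by
  classical
  set q := fun n => n ∉ addS A h with hq_def
  have hk : q (mexS A + h) := by
    rintro ⟨a, ha, heq⟩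
    simp only at heq
    have : a = mexS A := by omega
    exact mexS_not_mem hA (this ▸ ha)
  have hcount : Nat.count q (mexS A + h) = h := by
    rw [Nat.count_eq_card_filter_range]
    have heq : (Finset.range (mexS A + h)).filter q = Finset.range h := by
      ext j
      simp only [Finset.mem_filter, Finset.mem_range]
      constructor
      · rintro ⟨hjlt, hq⟩
        by_contra hjh; push_neg at hjh
        exact hq ⟨j - h, mem_of_lt_mexS (by omega), show j - h + h = j by omega⟩
      · intro hjh
        refine ⟨by omega, ?_⟩
        rintro ⟨a, _, heq2⟩
        simp only at heq2
        omega
    rw [heq, Finset.card_range]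
  calc Nat.nth q h = Nat.nth q (Nat.count q (mexS A + h)) := by rw [hcount]
  _ = mexS A + h := Nat.nth_count hk

lemma Gn_toSet_finite : ∀ n, (Gn n).toSet.Finite := by
  intro n
  induction n with
  | zero =>
    refine (Set.finite_singleton (∅ : ZFSet)).subset ?_
    intro x hx
    rw [ZFSet.mem_toSet] at hx
    simpa [Gn] using hx
  | succ n ih =>
    refine Set.Finite.of_finite_image (f := ZFSet.toSet) ?_ (ZFSet.toSet_injective.injOn)
    refine ih.finite_subsets.subset ?_
    rintro _ ⟨y, hy, rfl⟩
    rw [ZFSet.mem_toSet] at hy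
    rw [show Gn (n+1) = ZFSet.powerset (Gn n) from rfl, ZFSet.mem_powerset] at hy
    intro z hz
    rw [ZFSet.mem_toSet] at hz ⊢
    exact hy hz

lemma isGame_toSet_finite {G : ZFSet} (hG : IsGame G) : G.toSet.Finite := by
  obtain ⟨n, hn⟩ := hG
  cases n with
  | zero =>
    have : G = ∅ := by simpa [Gn] using hn
    simp [this, ZFSet.toSet_empty']
  | succ n =>
    rw [show Gn (n+1) = ZFSet.powerset (Gn n) from rfl, ZFSet.mem_powerset] at hn
    refine (Gn_toSet_finite n).subset ?_
    intro z hz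
    rw [ZFSet.mem_toSet] at hz ⊢
    exact hn hz

lemma mem_isGame {G x : ZFSet} (hG : IsGame G) (hx : x ∈ G) : IsGame x := by
  obtain ⟨n, hn⟩ := hG
  cases n with
  | zero =>
    have : G = ∅ := by simpa [Gn] using hn
    subst this
    exact absurd hx (ZFSet.notMem_empty x)
  | succ n =>
    rw [show Gn (n+1) = ZFSet.powerset (Gn n) from rfl, ZFSet.mem_powerset] at hn
    exact ⟨n, hn hx⟩

lemma vset_eq_image (g : ZFSet → ℕ) (G : ZFSet) : vset g G = g '' G.toSet := by
  ext n
  simp [vset, Set.mem_image, ZFSet.mem_toSet]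

lemma vset_finite {g : ZFSet → ℕ} {G : ZFSet} (hG : IsGame G) : (vset g G).Finite := by
  rw [vset_eq_image]
  exact (isGame_toSet_finite hG).image g

lemma key_lemma (f : ZFSet → ZFSet → ZFSet → ZFSet) (hf : IsOSub f)
    (g : ZFSet → ℕ) (hg : IsGrundy g) (Hh : ZFSet) (hHh : IsGame Hh) :
    ∀ G, IsGame G → ∀ H, IsGame H →
      vset g (f G H Hh) = colonS (addS (vset g G) (g Hh)) (vset g H) := by
  have hgv : ∀ X, g X = mexS (vset g X) := hg
  intro G
  induction G using ZFSet.inductionOn with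
  | _ G IHG =>
  intro hG H
  induction H using ZFSet.inductionOn with
  | _ H IHH =>
  intro hH
  have hstep2 : ∀ G' ∈ G, g (f G' Hh Hh) = g G' + g Hh := by
    intro G' hG'
    have hG'game := mem_isGame hG hG'
    have hv := IHG G' hG' hG'game Hh hHh
    calc g (f G' Hh Hh) = mexS (vset g (f G' Hh Hh)) := hgv _
    _ = mexS (colonS (addS (vset g G') (g Hh)) (vset g Hh)) := by rw [hv]
    _ = Nat.nth (fun n => n ∉ addS (vset g G') (g Hh)) (mexS (vset g Hh)) :=
        mexS_colonS ((vset_finite hG'game).image _) (vset_finite hHh)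
    _ = Nat.nth (fun n => n ∉ addS (vset g G') (g Hh)) (g Hh) := by rw [← hgv Hh]
    _ = mexS (vset g G') + g Hh := nth_addS (vset_finite hG'game) (g Hh)
    _ = g G' + g Hh := by rw [← hgv G']
  have hstep3 : ∀ H' ∈ H, g (f G H' Hh) =
      Nat.nth (fun n => n ∉ addS (vset g G) (g Hh)) (g H') := by
    intro H' hH'
    have hH'game := mem_isGame hH hH'
    have hv := IHH H' hH' hH'game
    calc g (f G H' Hh) = mexS (vset g (f G H' Hh)) := hgv _
    _ = mexS (colonS (addS (vset g G) (g Hh)) (vset g H')) := by rw [hv]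
    _ = Nat.nth (fun n => n ∉ addS (vset g G) (g Hh)) (mexS (vset g H')) :=
        mexS_colonS ((vset_finite hG).image _) (vset_finite hH'game)
    _ = Nat.nth (fun n => n ∉ addS (vset g G) (g Hh)) (g H') := by rw [← hgv H']
  ext n
  simp only [vset, colonS, addS, Set.mem_union, Set.mem_image, Set.mem_setOf_eq]
  constructor
  · rintro ⟨x, hx, rfl⟩
    rcases (hf G H Hh x).1 hx with ⟨G', hG', rfl⟩ | ⟨H', hH', rfl⟩
    · exact Or.inl ⟨g G', ⟨G', hG', rfl⟩, (hstep2 G' hG').symm⟩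
    · exact Or.inr ⟨g H', ⟨H', hH', rfl⟩, (hstep3 H' hH').symm⟩
  · rintro (⟨a, ⟨G', hG', rfl⟩, rfl⟩ | ⟨i, ⟨H', hH', rfl⟩, rfl⟩)
    · exact ⟨f G' Hh Hh, (hf G H Hh _).2 (Or.inl ⟨G', hG', rfl⟩), hstep2 G' hG'⟩
    · exact ⟨f G H' Hh, (hf G H Hh _).2 (Or.inr ⟨H', hH', rfl⟩), (hstep3 H' hH').symm ▸ rfl⟩


theorem stmt9 (f : ZFSet → ZFSet → ZFSet → ZFSet) (hf : IsOSub f)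
    (g : ZFSet → ℕ) (hg : IsGrundy g)
    (G H Hh : ZFSet) (hG : IsGame G) (hH : IsGame H) (hHh : IsGame Hh) :
    vset g (f G H Hh) = colonS (addS (vset g G) (mexS (vset g Hh))) (vset g H) := by
  rw [key_lemma f hf g hg Hh hHh G hG H hH,
    show mexS (vset g Hh) = g Hh from (hg Hh).symm]
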